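/- arXiv:2306.07360 — 2 statements merged into one kernel-verified Lean document; each statement's English description precedes it below -/
import Mathlib

section
/- Let L be a complete modular lattice and 𝔪 a submonoid with zero of End_lin(L) that is closed under complements. The following are equivalent: (a) L is 𝔪-endoregular; (b) L is 𝔪-Rickart and satisfies the 𝔪-C2 condition; (c) L is dual-𝔪-Rickart and satisfies the 𝔪-D2 condition; (d) for every φ ∈ 𝔪, both ker_φ and φ(⊤) have a complement in L. -/
section Preamble

variable {α β : Type*}

/-- A linear morphism between complete lattices: there is a kernel element `k` such that
`φ x = φ (x ⊔ k)` for all `x`, and `φ` restricts to an isomorphism of (complete) lattices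
from the interval `[k, ⊤]` onto `[⊥, φ ⊤]`. -/
def IsLinMor [CompleteLattice α] [CompleteLattice β] (φ : α → β) : Prop :=
  ∃ k : α, (∀ x, φ x = φ (x ⊔ k)) ∧
    ∃ e : Set.Icc k (⊤ : α) ≃o Set.Icc (⊥ : β) (φ ⊤),
      ∀ x : Set.Icc k (⊤ : α), (e x : β) = φ (x : α)

/-- The kernel of a linear morphism: the largest element sent to `⊥`. -/
noncomputable def linKer [CompleteLattice α] [CompleteLattice β] (φ : α → β) : α :=
  sSup {a | φ a = ⊥}

/-- A submonoid with zero of the monoid of linear endomorphisms of `α`. -/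
structure IsLinSubmonoid [CompleteLattice α] (M : Set (α → α)) : Prop where
  lin_mem : ∀ φ ∈ M, IsLinMor φ
  id_mem : (id : α → α) ∈ M
  zero_mem : (fun _ : α => (⊥ : α)) ∈ M
  comp_mem : ∀ φ ∈ M, ∀ ψ ∈ M, φ ∘ ψ ∈ M

/-- The projection onto `x` along a complement `x'`. -/
def proj [CompleteLattice α] (x x' : α) : α → α := fun a => (a ⊔ x') ⊓ x

/-- `M` is closed under complements: whenever `φ ∈ M` restricts to a linear isomorphism
`[⊥, x] → [⊥, y]` with `x, y` complemented, the composite `ι_x ∘ (φ|_x)⁻¹ ∘ π_y` is in `M`. -/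
def ClosedUnderComplements [CompleteLattice α] (M : Set (α → α)) : Prop :=
  ∀ φ ∈ M, ∀ x x' y y' : α, IsCompl x x' → IsCompl y y' →
    ∀ e : Set.Icc (⊥ : α) x ≃o Set.Icc (⊥ : α) y,
      (∀ a : Set.Icc (⊥ : α) x, ((e a : Set.Icc (⊥ : α) y) : α) = φ (a : α)) →
      (fun a : α =>
        ((e.symm ⟨(a ⊔ y') ⊓ y, bot_le, inf_le_right⟩ : Set.Icc (⊥ : α) x) : α)) ∈ M

/-- `L` is `M`-endoregular: `M` is a regular monoid. -/
def MEndoregular [CompleteLattice α] (M : Set (α → α)) : Prop :=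
  ∀ φ ∈ M, ∃ ψ ∈ M, φ ∘ ψ ∘ φ = φ

/-- `L` is `M`-Rickart: kernels of members of `M` have complements. -/
def MRickart [CompleteLattice α] (M : Set (α → α)) : Prop :=
  ∀ φ ∈ M, ∃ y, IsCompl (linKer φ) y

/-- `L` is dual-`M`-Rickart: images of members of `M` have complements. -/
def MDualRickart [CompleteLattice α] (M : Set (α → α)) : Prop :=
  ∀ φ ∈ M, ∃ y, IsCompl (φ ⊤) y

/-- The `M`-C2 condition. -/
def MC2 [CompleteLattice α] (M : Set (α → α)) : Prop :=
  ∀ a x x' : α, IsCompl x x' →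
    ∀ e : Set.Icc (⊥ : α) x ≃o Set.Icc (⊥ : α) a,
      ((fun b : α =>
          ((e ⟨(b ⊔ x') ⊓ x, bot_le, inf_le_right⟩ : Set.Icc (⊥ : α) a) : α)) ∈ M) →
      ∃ a', IsCompl a a'

/-- The `M`-D2 condition. -/
def MD2 [CompleteLattice α] (M : Set (α → α)) : Prop :=
  ∀ a x : α, (∃ x', IsCompl x x') →
    ∀ e : Set.Icc a (⊤ : α) ≃o Set.Icc (⊥ : α) x,
      ((fun b : α => ((e ⟨a ⊔ b, le_sup_left, le_top⟩ : Set.Icc (⊥ : α) x) : α)) ∈ M) →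
      ∃ a', IsCompl a a'

/-- `L` is `M`-abelian: every idempotent of `M` is central in `M`. -/
def MAbelian [CompleteLattice α] (M : Set (α → α)) : Prop :=
  ∀ ε ∈ M, ε ∘ ε = ε → ∀ φ ∈ M, ε ∘ φ = φ ∘ ε

/-- `a` is `M`-`L`-generated: it is a join of images of linear morphisms `L → [⊥, a]`
whose composites with the inclusion `ι_a` lie in `M`. -/
def MGenerated [CompleteLattice α] (M : Set (α → α)) (a : α) : Prop :=
  ∃ S : Set (α → α), S ⊆ M ∧ (∀ f ∈ S, ∀ x, f x ≤ a) ∧ (⨆ f ∈ S, f ⊤) = a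

/-- A complete lattice is compact if every join representation of `⊤` has a finite subjoin. -/
def CompactLat (α : Type*) [CompleteLattice α] : Prop :=
  ∀ s : Set α, sSup s = ⊤ → ∃ t : Finset α, ↑t ⊆ s ∧ sSup (↑t : Set α) = ⊤

/-- An element `c` is compact if the interval `[⊥, c]` is a compact lattice. -/
def CompactElt [CompleteLattice α] (c : α) : Prop :=
  ∀ s : Set α, (∀ a ∈ s, a ≤ c) → sSup s = c →
    ∃ t : Finset α, ↑t ⊆ s ∧ sSup (↑t : Set α) = c

/-- `x` is essential in `L`. -/
def Essential [CompleteLattice α] (x : α) : Prop := ∀ y, x ⊓ y = ⊥ → y = ⊥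

/-- `x` is essential in the interval `[⊥, c]`. -/
def EssentialIn [CompleteLattice α] (x c : α) : Prop :=
  x ≤ c ∧ ∀ y ≤ c, x ⊓ y = ⊥ → y = ⊥

/-- `x` is superfluous in `L`. -/
def Superfluous [CompleteLattice α] (x : α) : Prop := ∀ y, x ⊔ y = ⊤ → y = ⊤

/-- `x` is superfluous in the interval `[⊥, c]`. -/
def SuperfluousIn [CompleteLattice α] (x c : α) : Prop :=
  x ≤ c ∧ ∀ y ≤ c, x ⊔ y = c → y = c

/-- `M` contains all the projections. -/
def ContainsProjections [CompleteLattice α] (M : Set (α → α)) : Prop :=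
  ∀ x x' : α, IsCompl x x' → proj x x' ∈ M

/-- `L` is `M`-K-extending. -/
def MKExtending [CompleteLattice α] (M : Set (α → α)) : Prop :=
  ∀ φ ∈ M, ∃ c : α, (∃ c', IsCompl c c') ∧ EssentialIn (linKer φ) c

/-- `L` is `M`-K-nonsingular. -/
def MKNonsingular [CompleteLattice α] (M : Set (α → α)) : Prop :=
  ∀ φ ∈ M, Essential (linKer φ) → φ = fun _ => (⊥ : α)

/-- `L` is `M`-T-lifting. -/
def MTLifting [CompleteLattice α] (M : Set (α → α)) : Prop :=
  ∀ φ ∈ M, ∃ c c' : α, IsCompl c c' ∧ c ≤ φ ⊤ ∧ SuperfluousIn (φ ⊤ ⊓ c') c'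

end Preamble

/-!
A member `φ` of `M` is regular exactly when its kernel and image are complemented. If
`φ ψ φ = φ`, then `ψ φ` and `φ ψ` are idempotents with the kernel, resp. the image, of `φ`, and
an idempotent linear endomorphism splits `L` as its kernel plus its image. Conversely, with
`L = ker φ ⊕ k'` and `L = φ ⊤ ⊕ i'`, `φ` restricts to an isomorphism `[⊥, k'] ≃ [⊥, φ ⊤]`, and
closure under complements puts the quasi-inverse `ι ∘ (φ|_{k'})⁻¹ ∘ π_{φ ⊤}` into `M`.

Finally, `C2` (resp. `D2`) says exactly that images (resp. kernels) of members of `M` of a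
special shape are complemented; every member of `M` has that shape once its kernel (resp. its
image) is complemented.
-/

section IntervalIso

variable {α β : Type*} [PartialOrder α] [PartialOrder β]

theorem OrderIso.apply_Icc_left {a b : α} {c d : β} (e : Set.Icc a b ≃o Set.Icc c d)
    (hab : a ≤ b) : (e ⟨a, le_rfl, hab⟩ : β) = c := by
  have hcd : c ≤ d := (e ⟨a, le_rfl, hab⟩).2.1.trans (e ⟨a, le_rfl, hab⟩).2.2
  refine le_antisymm ?_ (e _).2.1
  have h := e.monotone (show ⟨a, le_rfl, hab⟩ ≤ e.symm ⟨c, le_rfl, hcd⟩ from (e.symm _).2.1)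
  rwa [e.apply_symm_apply] at h

theorem OrderIso.apply_Icc_right {a b : α} {c d : β} (e : Set.Icc a b ≃o Set.Icc c d)
    (hab : a ≤ b) : (e ⟨b, hab, le_rfl⟩ : β) = d := by
  have hcd : c ≤ d := (e ⟨b, hab, le_rfl⟩).2.1.trans (e ⟨b, hab, le_rfl⟩).2.2
  refine le_antisymm (e _).2.2 ?_
  have h := e.monotone (show e.symm ⟨d, hcd, le_rfl⟩ ≤ ⟨b, hab, le_rfl⟩ from (e.symm _).2.2)
  rwa [e.apply_symm_apply] at h

end IntervalIso

section LinearMorphism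

variable {α β : Type*} [CompleteLattice α] [CompleteLattice β]

theorem linKer_eq_of_forall_eq_bot_iff {φ : α → β} {k : α} (h : ∀ a, φ a = ⊥ ↔ a ≤ k) :
    linKer φ = k := by
  rw [linKer, show {a | φ a = ⊥} = Set.Iic k from Set.ext h, csSup_Iic]

theorem map_eq_bot_iff_of_orderIso {φ : α → β} {k : α} (hk : ∀ x, φ x = φ (x ⊔ k))
    (e : Set.Icc k (⊤ : α) ≃o Set.Icc (⊥ : β) (φ ⊤)) (he : ∀ x, (e x : β) = φ x) {a : α} :
    φ a = ⊥ ↔ a ≤ k := by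
  have hbot : φ k = ⊥ := by rw [← he ⟨k, le_rfl, le_top⟩]; exact e.apply_Icc_left le_top
  refine ⟨fun ha => ?_, fun ha => ?_⟩
  · have h : (⟨a ⊔ k, le_sup_right, le_top⟩ : Set.Icc k (⊤ : α)) = ⟨k, le_rfl, le_top⟩ :=
      e.injective <| Subtype.ext <| by rw [he, he, ← hk, ha, hbot]
    exact sup_eq_right.mp (congrArg Subtype.val h)
  · rw [hk, sup_eq_right.mpr ha, hbot]

theorem linKer_eq_of_orderIso {φ : α → β} {k : α} (hk : ∀ x, φ x = φ (x ⊔ k))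
    (e : Set.Icc k (⊤ : α) ≃o Set.Icc (⊥ : β) (φ ⊤)) (he : ∀ x, (e x : β) = φ x) :
    linKer φ = k :=
  linKer_eq_of_forall_eq_bot_iff fun _ => map_eq_bot_iff_of_orderIso hk e he

namespace IsLinMor

variable {φ : α → β} (hφ : IsLinMor φ)
include hφ

theorem map_sup_linKer (x : α) : φ (x ⊔ linKer φ) = φ x := by
  obtain ⟨k, hk, e, he⟩ := hφ
  rw [linKer_eq_of_orderIso hk e he, ← hk]

theorem exists_orderIso :
    ∃ e : Set.Icc (linKer φ) (⊤ : α) ≃o Set.Icc (⊥ : β) (φ ⊤), ∀ x, (e x : β) = φ x := by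
  obtain ⟨k, hk, e, he⟩ := hφ
  rw [linKer_eq_of_orderIso hk e he]
  exact ⟨e, he⟩

theorem eq_of_map_eq {x y : α} (hx : linKer φ ≤ x) (hy : linKer φ ≤ y) (h : φ x = φ y) :
    x = y := by
  obtain ⟨e, he⟩ := hφ.exists_orderIso
  have h' : e ⟨x, hx, le_top⟩ = e ⟨y, hy, le_top⟩ := Subtype.ext (by rw [he, he, h])
  exact congrArg Subtype.val (e.injective h')

theorem map_eq_bot_iff {a : α} : φ a = ⊥ ↔ a ≤ linKer φ := by
  obtain ⟨k, hk, e, he⟩ := hφ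
  rw [linKer_eq_of_orderIso hk e he]
  exact map_eq_bot_iff_of_orderIso hk e he

theorem map_bot : φ ⊥ = ⊥ :=
  hφ.map_eq_bot_iff.mpr bot_le

theorem monotone : Monotone φ := by
  obtain ⟨e, he⟩ := hφ.exists_orderIso
  intro a b hab
  rw [← hφ.map_sup_linKer a, ← hφ.map_sup_linKer b, ← he ⟨_, le_sup_right, le_top⟩,
    ← he ⟨_, le_sup_right, le_top⟩]
  exact e.monotone (sup_le_sup_right hab _)

theorem exists_map_eq {b : β} (hb : b ≤ φ ⊤) : ∃ a, φ a = b := by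
  obtain ⟨e, he⟩ := hφ.exists_orderIso
  exact ⟨e.symm ⟨b, bot_le, hb⟩, by rw [← he, e.apply_symm_apply]⟩

end IsLinMor

theorem IsLinMor.isCompl_of_comp_self {ε : α → α} (hε : IsLinMor ε) (hi : ε ∘ ε = ε) :
    IsCompl (linKer ε) (ε ⊤) := by
  have hfix : ∀ a ≤ ε ⊤, ε a = a := by
    intro a ha
    obtain ⟨b, rfl⟩ := hε.exists_map_eq ha
    exact congrFun hi b
  refine IsCompl.of_eq ?_ ?_
  · rw [← hfix _ inf_le_right]
    exact hε.map_eq_bot_iff.mpr inf_le_left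
  · refine hε.eq_of_map_eq le_sup_left le_top ?_
    rw [sup_comm, hε.map_sup_linKer, hfix _ le_rfl]

theorem IsLinMor.linKer_comp_of_comp_comp {φ ψ : α → α} (hφ : IsLinMor φ) (hψ : IsLinMor ψ)
    (h : φ ∘ ψ ∘ φ = φ) : linKer (ψ ∘ φ) = linKer φ := by
  refine linKer_eq_of_forall_eq_bot_iff fun a => ?_
  rw [← hφ.map_eq_bot_iff]
  refine ⟨fun ha => ?_, fun ha => by rw [Function.comp_apply, ha, hψ.map_bot]⟩
  rw [← congrFun h a]
  show φ ((ψ ∘ φ) a) = ⊥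
  rw [ha, hφ.map_bot]

theorem comp_map_top_of_comp_comp {φ ψ : α → α} (hφ : Monotone φ) (hψ : Monotone ψ)
    (h : φ ∘ ψ ∘ φ = φ) : (φ ∘ ψ) ⊤ = φ ⊤ :=
  le_antisymm (hφ le_top) <| calc
    φ ⊤ = φ (ψ (φ ⊤)) := (congrFun h ⊤).symm
    _ ≤ φ (ψ ⊤) := hφ (hψ le_top)

end LinearMorphism

section Modular

/-- The map `x ↦ x ⊔ k`, bijective by modularity. -/
def IsCompl.IccBotOrderIsoIccTop {α : Type*} [Lattice α] [BoundedOrder α] [IsModularLattice α]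
    {k' k : α} (h : IsCompl k' k) : Set.Icc (⊥ : α) k' ≃o Set.Icc k (⊤ : α) :=
  (OrderIso.setCongr _ _ (by rw [h.inf_eq_bot])).trans <|
    (infIccOrderIsoIccSup k' k).trans (OrderIso.setCongr _ _ (by rw [h.sup_eq_top]))

variable {α β : Type*} [CompleteLattice α] [IsModularLattice α] [CompleteLattice β]

theorem proj_of_le {x x' a : α} (h : IsCompl x x') (ha : a ≤ x) : proj x x' a = a := by
  rw [proj, sup_inf_assoc_of_le _ ha, h.symm.inf_eq_bot, sup_bot_eq]

namespace IsLinMor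

variable {φ : α → β} (hφ : IsLinMor φ) {k' : α} (hk' : IsCompl (linKer φ) k')
include hφ hk'

theorem map_proj (a : α) : φ (proj k' (linKer φ) a) = φ a := by
  rw [proj, ← hφ.map_sup_linKer, inf_sup_assoc_of_le _ le_sup_right, sup_comm k',
    hk'.sup_eq_top, inf_top_eq, hφ.map_sup_linKer]

theorem exists_orderIso_of_isCompl :
    ∃ e : Set.Icc (⊥ : α) k' ≃o Set.Icc (⊥ : β) (φ ⊤), ∀ a, (e a : β) = φ a := by
  obtain ⟨e, he⟩ := hφ.exists_orderIso
  exact ⟨hk'.symm.IccBotOrderIsoIccTop.trans e, fun a => (he _).trans (hφ.map_sup_linKer a)⟩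

end IsLinMor

end Modular

namespace IsLinSubmonoid

variable {α : Type*} [CompleteLattice α] {M : Set (α → α)}

theorem mRickart_and_mDualRickart_of_mEndoregular (hM : IsLinSubmonoid M)
    (hreg : MEndoregular M) : MRickart M ∧ MDualRickart M := by
  refine ⟨fun φ hφM => ?_, fun φ hφM => ?_⟩ <;> obtain ⟨ψ, hψM, h⟩ := hreg φ hφM
  · have hψφ := hM.lin_mem _ (hM.comp_mem ψ hψM φ hφM)
    refine ⟨(ψ ∘ φ) ⊤, ?_⟩
    rw [← (hM.lin_mem φ hφM).linKer_comp_of_comp_comp (hM.lin_mem ψ hψM) h]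
    exact hψφ.isCompl_of_comp_self (funext fun x => congrArg ψ (congrFun h x))
  · have hφψ := hM.lin_mem _ (hM.comp_mem φ hφM ψ hψM)
    refine ⟨linKer (φ ∘ ψ), ?_⟩
    rw [← comp_map_top_of_comp_comp (hM.lin_mem φ hφM).monotone (hM.lin_mem ψ hψM).monotone h]
    exact (hφψ.isCompl_of_comp_self (funext fun x => congrFun h (ψ x))).symm

theorem mEndoregular_of_mRickart_of_mDualRickart [IsModularLattice α] (hM : IsLinSubmonoid M)
    (hcc : ClosedUnderComplements M) (hr : MRickart M) (hdr : MDualRickart M) :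
    MEndoregular M := by
  intro φ hφM
  obtain ⟨k', hk'⟩ := hr φ hφM
  obtain ⟨i', hi'⟩ := hdr φ hφM
  have hφ := hM.lin_mem φ hφM
  obtain ⟨e, he⟩ := hφ.exists_orderIso_of_isCompl hk'
  refine ⟨_, hcc φ hφM k' (linKer φ) (φ ⊤) i' hk'.symm hi' e he, funext fun a => ?_⟩
  show φ (e.symm _ : α) = φ a
  rw [← he, e.apply_symm_apply]
  exact proj_of_le hi' (hφ.monotone le_top)

theorem mDualRickart_of_mRickart_of_mC2 [IsModularLattice α] (hM : IsLinSubmonoid M)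
    (hr : MRickart M) (hc2 : MC2 M) : MDualRickart M := by
  intro φ hφM
  have hφ := hM.lin_mem φ hφM
  obtain ⟨k', hk'⟩ := hr φ hφM
  obtain ⟨e, he⟩ := hφ.exists_orderIso_of_isCompl hk'
  refine hc2 (φ ⊤) k' (linKer φ) hk'.symm e ?_
  convert hφM using 1
  exact funext fun b => (he _).trans (hφ.map_proj hk' b)

theorem mRickart_of_mDualRickart_of_mD2 (hM : IsLinSubmonoid M) (hdr : MDualRickart M)
    (hd2 : MD2 M) : MRickart M := by
  intro φ hφM
  have hφ := hM.lin_mem φ hφM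
  obtain ⟨e, he⟩ := hφ.exists_orderIso
  refine hd2 (linKer φ) (φ ⊤) (hdr φ hφM) e ?_
  convert hφM using 1
  exact funext fun b =>
    (he _).trans ((congrArg φ (sup_comm _ _)).trans (hφ.map_sup_linKer b))

end IsLinSubmonoid

section Conditions

variable {α : Type*} [CompleteLattice α] {M : Set (α → α)}

theorem mC2_of_mDualRickart (hdr : MDualRickart M) : MC2 M := by
  intro a x x' _ e hf
  have htop : (⟨(⊤ ⊔ x') ⊓ x, bot_le, inf_le_right⟩ : Set.Icc (⊥ : α) x) = ⟨x, bot_le, le_rfl⟩ :=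
    Subtype.ext (show (⊤ ⊔ x') ⊓ x = x by rw [top_sup_eq, top_inf_eq])
  obtain ⟨a', ha'⟩ := hdr _ hf
  refine ⟨a', ?_⟩
  simpa only [htop, e.apply_Icc_right bot_le] using ha'

theorem mD2_of_mRickart (hr : MRickart M) : MD2 M := by
  intro a x _ e hf
  have hker : ∀ b, ((e ⟨a ⊔ b, le_sup_left, le_top⟩ : Set.Icc (⊥ : α) x) : α) = ⊥ ↔ b ≤ a :=
    fun b => calc
      _ ↔ ((e ⟨a ⊔ b, le_sup_left, le_top⟩ : Set.Icc (⊥ : α) x) : α) = e ⟨a, le_rfl, le_top⟩ := by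
        rw [e.apply_Icc_left le_top]
      _ ↔ b ≤ a := by
        rw [Subtype.coe_inj, e.apply_eq_iff_eq]
        exact Subtype.ext_iff.trans sup_eq_left
  obtain ⟨a', ha'⟩ := hr _ hf
  exact ⟨a', linKer_eq_of_forall_eq_bot_iff hker ▸ ha'⟩

end Conditions

/-- For a submonoid with zero `M ⊆ End_lin(L)` closed under complements, the
conditions (a) `M`-endoregular, (b) `M`-Rickart + `M`-C2, (c) dual-`M`-Rickart + `M`-D2 and
(d) kernels and images of members of `M` are complemented, are all equivalent. -/
theorem stmt_3 {α : Type*} [CompleteLattice α] [IsModularLattice α]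
    (M : Set (α → α)) (hM : IsLinSubmonoid M) (hcc : ClosedUnderComplements M) :
    (MEndoregular M ↔ MRickart M ∧ MC2 M) ∧
    (MEndoregular M ↔ MDualRickart M ∧ MD2 M) ∧
    (MEndoregular M ↔
      ∀ φ ∈ M, (∃ k', IsCompl (linKer φ) k') ∧ (∃ i', IsCompl (φ ⊤) i')) := by
  have hreg : MEndoregular M ↔ MRickart M ∧ MDualRickart M :=
    ⟨hM.mRickart_and_mDualRickart_of_mEndoregular,
      fun h => hM.mEndoregular_of_mRickart_of_mDualRickart hcc h.1 h.2⟩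
  refine ⟨hreg.trans ⟨?_, ?_⟩, hreg.trans ⟨?_, ?_⟩, hreg.trans forall₂_and.symm⟩
  · exact fun ⟨hr, hdr⟩ => ⟨hr, mC2_of_mDualRickart hdr⟩
  · exact fun ⟨hr, hc2⟩ => ⟨hr, hM.mDualRickart_of_mRickart_of_mC2 hr hc2⟩
  · exact fun ⟨hr, hdr⟩ => ⟨hdr, mD2_of_mRickart hr⟩
  · exact fun ⟨hdr, hd2⟩ => ⟨hM.mRickart_of_mDualRickart_of_mD2 hdr hd2, hdr⟩
end

section
/- Let L be a complete modular lattice and 𝔪 a submonoid with zero of End_lin(L) that is closed under complements. The following are equivalent: (a) L is 𝔪-Rickart, dual-𝔪-Rickart, and 𝔪-abelian; (b) for every φ ∈ 𝔪, ker_φ ⊓ φ(⊤) = ⊥ and ker_φ ⊔ φ(⊤) = ⊤ (i.e., φ(⊤) is a complement of ker_φ). -/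
/-
Closure under complements, applied to the identity, puts every projection `π_x` into `𝔪`, and
these are idempotent. If `𝔪` is abelian, `φ` commutes with the projections onto `ker_φ` and onto
`φ ⊤`; evaluating at `⊤` and at a complement of `φ ⊤` gives (b).
Conversely, under (b) every `φ ∈ 𝔪` leaves each complemented `x` invariant: `π_{x'} ∘ φ ∘ π_x`
lies in `𝔪`, kills `x'` and has image inside `x'`, so its image lies in its kernel and vanishes.
A sup-preserving map leaving `x` and `x'` invariant commutes with `π_x`, and an idempotent
`ε ∈ 𝔪` is the projection onto `ε ⊤` along `ker_ε`, which is a complement of `ε ⊤` by (b).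
-/

section LinearMorphism

variable {α β : Type*} [CompleteLattice α] [CompleteLattice β] {φ : α → β}

theorem le_linKer {a : α} (h : φ a = ⊥) : a ≤ linKer φ :=
  le_sSup h

theorem IsLinMor.linKer_spec (hφ : IsLinMor φ) :
    (∀ x, φ x = φ (x ⊔ linKer φ)) ∧
      ∃ e : Set.Icc (linKer φ) (⊤ : α) ≃o Set.Icc (⊥ : β) (φ ⊤),
        ∀ x : Set.Icc (linKer φ) (⊤ : α), (e x : β) = φ (x : α) := by
  obtain ⟨k, hk, e, he⟩ := hφ
  have hφk : φ k = ⊥ := by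
    have hk_le : (⟨k, le_rfl, le_top⟩ : Set.Icc k (⊤ : α)) ≤ e.symm ⟨⊥, le_rfl, bot_le⟩ :=
      (e.symm ⟨⊥, le_rfl, bot_le⟩).2.1
    have := e.monotone hk_le
    rwa [e.apply_symm_apply, ← Subtype.coe_le_coe, he, le_bot_iff] at this
  have hker : linKer φ = k := by
    refine le_antisymm (sSup_le fun a (ha : φ a = ⊥) => ?_) (le_linKer hφk)
    have hak : (⟨a ⊔ k, le_sup_right, le_top⟩ : Set.Icc k (⊤ : α)) = ⟨k, le_rfl, le_top⟩ :=
      e.injective <| Subtype.ext <| by rw [he, he, ← hk, ha, hφk]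
    exact le_sup_left.trans (congrArg Subtype.val hak).le
  subst hker
  exact ⟨hk, e, he⟩

theorem IsLinMor.map_sup_linKer_s9 (hφ : IsLinMor φ) (x : α) : φ (x ⊔ linKer φ) = φ x :=
  (hφ.linKer_spec.1 x).symm

theorem IsLinMor.map_sup (hφ : IsLinMor φ) (a b : α) : φ (a ⊔ b) = φ a ⊔ φ b := by
  obtain ⟨-, e, he⟩ := hφ.linKer_spec
  let lift : α → Set.Icc (linKer φ) (⊤ : α) := fun x => ⟨x ⊔ linKer φ, le_sup_right, le_top⟩
  have hlift : lift (a ⊔ b) = lift a ⊔ lift b :=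
    Subtype.ext (sup_sup_distrib_right a b (linKer φ))
  calc φ (a ⊔ b) = e (lift a ⊔ lift b) := by rw [← hlift, he, hφ.map_sup_linKer_s9]
    _ = φ a ⊔ φ b := by
      rw [e.map_sup, Set.Icc.coe_sup, he, he, hφ.map_sup_linKer_s9, hφ.map_sup_linKer_s9]

theorem monotone_of_map_sup (h : ∀ a b, φ (a ⊔ b) = φ a ⊔ φ b) : Monotone φ :=
  OrderHomClass.mono (SupHom.mk φ h)

theorem IsLinMor.monotone_s9 (hφ : IsLinMor φ) : Monotone φ :=
  monotone_of_map_sup hφ.map_sup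

theorem IsLinMor.exists_map_eq_s9 (hφ : IsLinMor φ) {c : β} (hc : c ≤ φ ⊤) : ∃ z, φ z = c := by
  obtain ⟨-, e, he⟩ := hφ.linKer_spec
  exact ⟨e.symm ⟨c, bot_le, hc⟩, by rw [← he, e.apply_symm_apply]⟩

theorem IsLinMor.map_bot_s9 (hφ : IsLinMor φ) : φ ⊥ = ⊥ := by
  obtain ⟨z, hz⟩ := hφ.exists_map_eq_s9 (bot_le : ⊥ ≤ φ ⊤)
  exact le_bot_iff.mp (hz ▸ hφ.monotone_s9 bot_le)

theorem IsLinMor.map_linKer (hφ : IsLinMor φ) : φ (linKer φ) = ⊥ := by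
  rw [← bot_sup_eq (linKer φ), hφ.map_sup_linKer_s9, hφ.map_bot_s9]

end LinearMorphism

section Projection

variable {α : Type*} [CompleteLattice α] {x x' : α}

theorem proj_top : proj x x' ⊤ = x := by
  simp [proj]

theorem proj_bot (h : IsCompl x x') : proj x x' ⊥ = ⊥ := by
  rw [proj, bot_sup_eq, inf_comm, h.inf_eq_bot]

theorem proj_apply_compl (h : IsCompl x x') : proj x x' x' = ⊥ := by
  rw [proj, sup_idem, inf_comm, h.inf_eq_bot]

theorem proj_mem {M : Set (α → α)} (hM : IsLinSubmonoid M) (hcc : ClosedUnderComplements M)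
    (h : IsCompl x x') : proj x x' ∈ M :=
  hcc id hM.id_mem x x' x x' h h (OrderIso.refl _) fun _ => rfl

theorem IsLinMor.linKer_inf_map_top_eq_bot {φ : α → α} (hφ : IsLinMor φ) {k' : α}
    (hcomm : proj (linKer φ) k' ∘ φ = φ ∘ proj (linKer φ) k') :
    linKer φ ⊓ φ ⊤ = ⊥ := by
  have h : proj (linKer φ) k' (φ ⊤) = ⊥ := by
    simpa only [Function.comp_apply, proj_top, hφ.map_linKer] using congrFun hcomm ⊤
  rw [eq_bot_iff, ← h, inf_comm]
  exact inf_le_inf_right _ (le_sup_left : φ ⊤ ≤ φ ⊤ ⊔ k')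

variable [IsModularLattice α]

theorem proj_eq_self_of_le (h : IsCompl x x') {b : α} (hb : b ≤ x) : proj x x' b = b := by
  rw [proj, sup_inf_assoc_of_le x' hb, inf_comm, h.inf_eq_bot, sup_bot_eq]

theorem proj_sup_eq (h : IsCompl x x') (a : α) : proj x x' a ⊔ x' = a ⊔ x' := by
  rw [proj, inf_comm, sup_comm _ x', ← sup_inf_assoc_of_le x le_sup_right, sup_comm x' x,
    h.sup_eq_top, top_inf_eq]

theorem proj_idem (h : IsCompl x x') : proj x x' ∘ proj x x' = proj x x' :=
  funext fun _ => proj_eq_self_of_le h inf_le_right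

theorem proj_comp_comm (h : IsCompl x x') {φ : α → α} (hsup : ∀ a b, φ (a ⊔ b) = φ a ⊔ φ b)
    (hx : φ x ≤ x) (hx' : φ x' ≤ x') : proj x x' ∘ φ = φ ∘ proj x x' := by
  funext a
  have hsup_eq : φ a ⊔ x' = φ (proj x x' a) ⊔ x' := by
    calc φ a ⊔ x' = φ (a ⊔ x') ⊔ x' := by rw [hsup, sup_assoc, sup_eq_right.mpr hx']
      _ = φ (proj x x' a ⊔ x') ⊔ x' := by rw [proj_sup_eq h]
      _ = φ (proj x x' a) ⊔ x' := by rw [hsup, sup_assoc, sup_eq_right.mpr hx']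
  calc proj x x' (φ a) = proj x x' (φ (proj x x' a)) := by
        simp only [proj, hsup_eq]
    _ = φ (proj x x' a) := proj_eq_self_of_le h ((monotone_of_map_sup hsup inf_le_right).trans hx)

end Projection

section Characterization

variable {α : Type*} [CompleteLattice α] [IsModularLattice α]

theorem IsLinMor.linKer_sup_map_top_eq_top {φ : α → α} (hφ : IsLinMor φ) {i' : α}
    (hi' : IsCompl (φ ⊤) i') (hcomm : proj (φ ⊤) i' ∘ φ = φ ∘ proj (φ ⊤) i') :
    linKer φ ⊔ φ ⊤ = ⊤ := by
  have h : φ i' = ⊥ := by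
    have := congrFun hcomm i'
    rwa [Function.comp_apply, Function.comp_apply, proj_apply_compl hi', hφ.map_bot_s9,
      proj_eq_self_of_le hi' (hφ.monotone_s9 le_top)] at this
  apply top_le_iff.mp
  calc ⊤ = φ ⊤ ⊔ i' := hi'.sup_eq_top.symm
    _ ≤ φ ⊤ ⊔ linKer φ := sup_le_sup_left (le_linKer h) _
    _ = linKer φ ⊔ φ ⊤ := sup_comm _ _

theorem IsLinMor.eq_proj_of_idempotent {ε : α → α} (hε : IsLinMor ε) (hidem : ε ∘ ε = ε)
    (h : IsCompl (ε ⊤) (linKer ε)) : ε = proj (ε ⊤) (linKer ε) := by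
  have hfix : ∀ y ≤ ε ⊤, ε y = y := fun y hy => by
    obtain ⟨z, rfl⟩ := hε.exists_map_eq_s9 hy
    exact congrFun hidem z
  funext a
  calc ε a = ε (a ⊔ linKer ε) := (hε.map_sup_linKer_s9 a).symm
    _ = ε (proj (ε ⊤) (linKer ε) a ⊔ linKer ε) := by rw [proj_sup_eq h]
    _ = proj (ε ⊤) (linKer ε) a := by rw [hε.map_sup_linKer_s9]; exact hfix _ inf_le_right

theorem map_le_of_isCompl {M : Set (α → α)} (hM : IsLinSubmonoid M)
    (hcc : ClosedUnderComplements M) (hker : ∀ ψ ∈ M, linKer ψ ⊓ ψ ⊤ = ⊥)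
    {φ : α → α} (hφ : φ ∈ M) {x x' : α} (hx : IsCompl x x') : φ x ≤ x := by
  set ψ := proj x' x ∘ φ ∘ proj x x'
  have hψ : ψ ∈ M :=
    hM.comp_mem _ (proj_mem hM hcc hx.symm) _ (hM.comp_mem _ hφ _ (proj_mem hM hcc hx))
  have hψx' : ψ x' = ⊥ := by
    simp only [ψ, Function.comp_apply, proj_apply_compl hx, (hM.lin_mem φ hφ).map_bot_s9,
      proj_bot hx.symm]
  have hψtop : ψ ⊤ = ⊥ := by
    rw [← hker ψ hψ]
    exact le_antisymm (le_inf (inf_le_right.trans (le_linKer hψx')) le_rfl) inf_le_right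
  have hφx : proj x' x (φ x) = ⊥ := by
    simpa only [ψ, Function.comp_apply, proj_top] using hψtop
  rw [← sup_eq_right, ← proj_sup_eq hx.symm, hφx, bot_sup_eq]

end Characterization

/-- `L` is `M`-Rickart, dual-`M`-Rickart and `M`-abelian iff for every `φ ∈ M`,
`φ ⊤` is a complement of `ker_φ`. -/
theorem stmt_9 {α : Type*} [CompleteLattice α] [IsModularLattice α]
    (M : Set (α → α)) (hM : IsLinSubmonoid M) (hcc : ClosedUnderComplements M) :
    (MRickart M ∧ MDualRickart M ∧ MAbelian M) ↔
      (∀ φ ∈ M, linKer φ ⊓ φ ⊤ = ⊥ ∧ linKer φ ⊔ φ ⊤ = ⊤) := by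
  constructor
  · rintro ⟨hR, hD, hA⟩ φ hφ
    have hlin := hM.lin_mem φ hφ
    obtain ⟨k', hk'⟩ := hR φ hφ
    obtain ⟨i', hi'⟩ := hD φ hφ
    exact ⟨hlin.linKer_inf_map_top_eq_bot (hA _ (proj_mem hM hcc hk') (proj_idem hk') φ hφ),
      hlin.linKer_sup_map_top_eq_top hi' (hA _ (proj_mem hM hcc hi') (proj_idem hi') φ hφ)⟩
  · intro hb
    have hcompl : ∀ φ ∈ M, IsCompl (linKer φ) (φ ⊤) := fun φ hφ =>
      IsCompl.of_eq (hb φ hφ).1 (hb φ hφ).2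
    refine ⟨fun φ hφ => ⟨_, hcompl φ hφ⟩, fun φ hφ => ⟨_, (hcompl φ hφ).symm⟩, ?_⟩
    intro ε hε hidem φ hφ
    have hinv : ∀ x x' : α, IsCompl x x' → φ x ≤ x := fun x x' hx =>
      map_le_of_isCompl hM hcc (fun ψ hψ => (hb ψ hψ).1) hφ hx
    have hεc := (hcompl ε hε).symm
    rw [(hM.lin_mem ε hε).eq_proj_of_idempotent hidem hεc]
    exact proj_comp_comm hεc (hM.lin_mem φ hφ).map_sup (hinv _ _ hεc) (hinv _ _ hεc.symm)
end
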